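/- Let F be a field of characteristic different from two, and let p and q be forms over F with p anisotropic. If the tensor product p ⊗ q is isotropic, then p contains a subform r with dim r ≤ dim q such that r ⊗ q is isotropic. -/

import Mathlib

set_option synthInstance.maxHeartbeats 1000000
set_option maxHeartbeats 4000000

open scoped BigOperators Classical

namespace QF

section Defs

variable {R : Type*} [CommRing R]

/-- Evaluation of the diagonal quadratic form with coefficients `d` at the vector `v`. -/
def evalQF {n : ℕ} (d : Fin n → R) (v : Fin n → R) : R := ∑ i, d i * v i ^ 2

/-- A form is isotropic if it represents zero non-trivially. -/
def Isotropic {n : ℕ} (d : Fin n → R) : Prop := ∃ v : Fin n → R, v ≠ 0 ∧ evalQF d v = 0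

def Anisotropic {n : ℕ} (d : Fin n → R) : Prop := ¬ Isotropic d

/-- Nondegeneracy of a diagonal form: all coefficients are nonzero. -/
def Nondeg {n : ℕ} (d : Fin n → R) : Prop := ∀ i, d i ≠ 0

/-- Two diagonal forms are isometric if a linear equivalence matches their values. -/
def Isometric {m n : ℕ} (d : Fin m → R) (e : Fin n → R) : Prop :=
  ∃ φ : (Fin m → R) ≃ₗ[R] (Fin n → R), ∀ v, evalQF e (φ v) = evalQF d v

/-- Orthogonal sum of diagonal forms. -/
def osum {m n : ℕ} (d : Fin m → R) (e : Fin n → R) : Fin (m + n) → R := Fin.append d e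

/-- Tensor product of diagonal forms. -/
def tensorQF {m n : ℕ} (d : Fin m → R) (e : Fin n → R) : Fin (m * n) → R :=
  fun i => d (finProdFinEquiv.symm i).1 * e (finProdFinEquiv.symm i).2

/-- Scaling of a form by a scalar. -/
def smulQF {n : ℕ} (a : R) (d : Fin n → R) : Fin n → R := fun i => a * d i

/-- `k` copies of the hyperbolic plane `⟨1,-1⟩`. -/
def hypform {R : Type*} [CommRing R] (k : ℕ) : Fin (k + k) → R :=
  Fin.append (fun _ => 1) (fun _ => -1)

/-- A form is hyperbolic if it is isometric to a sum of hyperbolic planes,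
i.e. its Witt index is half its dimension. -/
def IsHyperbolic {n : ℕ} (d : Fin n → R) : Prop := ∃ k : ℕ, Isometric d (hypform k)

/-- The Witt index: the largest `k` such that `d ≅ k×⟨1,-1⟩ ⊥ r`. -/
noncomputable def WittIndex {n : ℕ} (d : Fin n → R) : ℕ :=
  sSup {k : ℕ | ∃ (m : ℕ) (r : Fin m → R), Isometric d (osum (hypform k) r)}

/-- `r` is a subform of `d`: `d ≅ r ⊥ s` for some (nondegenerate) form `s`. -/
def Subform {m n : ℕ} (r : Fin m → R) (d : Fin n → R) : Prop :=
  ∃ (k : ℕ) (s : Fin k → R), Nondeg s ∧ Isometric d (osum r s)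

/-- The set of nonzero represented values. -/
def Dset {n : ℕ} (d : Fin n → R) : Set R :=
  {a | a ≠ 0 ∧ ∃ v : Fin n → R, evalQF d v = a}

/-- The group of similarity factors `G(q) = {a : a·q ≅ q}`. -/
def Gset {n : ℕ} (d : Fin n → R) : Set R :=
  {a | a ≠ 0 ∧ Isometric (smulQF a d) d}

/-- `H(q) = {a : ⟨1,-a⟩ ⊗ q is isotropic}`. -/
def Hset {n : ℕ} (d : Fin n → R) : Set R :=
  {a | a ≠ 0 ∧ Isotropic (tensorQF ![1, -a] d)}

/-- Base change of a form along a ring homomorphism (e.g. a field extension). -/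
def bc {S : Type*} [CommRing S] (f : R →+* S) {n : ℕ} (d : Fin n → R) : Fin n → S :=
  fun i => f (d i)

/-- The Pfister form `⟨1,a 0⟩ ⊗ ⋯ ⊗ ⟨1, a (n-1)⟩`: its `2^n` diagonal coefficients are
the products `∏_{j ∈ S} a j` over subsets `S` of the index set. -/
noncomputable def pfisterOf {n : ℕ} (a : Fin n → R) : Fin (2 ^ n) → R :=
  fun i => ∏ j : Fin n, if (finFunctionFinEquiv.symm i) j = 0 then 1 else a j

/-- `π` is an `n`-fold Pfister form. -/
def IsNPfister (n : ℕ) {m : ℕ} (π : Fin m → R) : Prop :=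
  ∃ a : Fin n → R, (∀ i, a i ≠ 0) ∧ Isometric π (pfisterOf a)

/-- `π` is a Pfister form. -/
def IsPfister {m : ℕ} (π : Fin m → R) : Prop := ∃ n : ℕ, IsNPfister n π

end Defs

/-- The quadric polynomial `p(X₁,…,Xₙ) = ∑ dᵢ Xᵢ²` attached to a diagonal form. -/
noncomputable def formPoly {F : Type*} [CommRing F] {n : ℕ} (d : Fin n → F) :
    MvPolynomial (Fin n) F :=
  ∑ i, MvPolynomial.C (d i) * MvPolynomial.X i ^ 2

/-- The affine coordinate ring `F[X₁,…,Xₙ]/(p(X))` of the quadric `p = 0`. -/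
abbrev CoordRing {F : Type*} [CommRing F] {n : ℕ} (d : Fin n → F) : Type _ :=
  MvPolynomial (Fin n) F ⧸ Ideal.span {formPoly d}

/-- The function field `F(p)` of the quadric `p = 0`: the total fraction ring of the
coordinate ring (the quotient field when the coordinate ring is a domain, i.e. when `p` is
anisotropic of dimension at least 2). -/
abbrev FunField {F : Type*} [Field F] {n : ℕ} (d : Fin n → F) : Type _ :=
  FractionRing (CoordRing d)

end QF

/-!
Read an isotropic vector of `p ⊗ q` as a family of vectors `u j` in the space of `p` with
`∑ j, q j * p (u j) = 0`. Their span `X` has dimension at most `dim q`, and since `p` is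
anisotropic its restriction to `X` is nondegenerate, so `p ≅ p|X ⊥ p|X^⊥`. Diagonalising
both parts (char `F ≠ 2`), `r := p|X` is a subform of `p`, and the coordinates of the `u j` in
an orthogonal basis of `X` form an isotropic vector of `r ⊗ q`.
-/

namespace QF

section CommRing

variable {R : Type*} [CommRing R] {n : ℕ}

def tensorColumns {a b : ℕ} : (Fin (a * b) → R) ≃ₗ[R] (Fin b → Fin a → R) where
  toFun w j i := w (finProdFinEquiv (i, j))
  invFun u x := u (finProdFinEquiv.symm x).2 (finProdFinEquiv.symm x).1
  map_add' _ _ := rfl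
  map_smul' _ _ := rfl
  left_inv w := funext fun x => by simp only [Prod.mk.eta, Equiv.apply_symm_apply]
  right_inv u := by simp

@[simp]
lemma tensorColumns_apply {a b : ℕ} (w : Fin (a * b) → R) (j : Fin b) (i : Fin a) :
    tensorColumns w j i = w (finProdFinEquiv (i, j)) := rfl

lemma evalQF_tensorQF {a b : ℕ} (d : Fin a → R) (e : Fin b → R) (w : Fin (a * b) → R) :
    evalQF (tensorQF d e) w = ∑ j, e j * evalQF d (tensorColumns w j) := by
  rw [evalQF, ← finProdFinEquiv.sum_comp, Fintype.sum_prod_type, Finset.sum_comm]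
  refine Finset.sum_congr rfl fun j _ => ?_
  rw [evalQF, Finset.mul_sum]
  refine Finset.sum_congr rfl fun i _ => ?_
  simp only [tensorQF, tensorColumns_apply, Equiv.symm_apply_apply]
  ring

lemma isotropic_tensorQF_iff {a b : ℕ} (d : Fin a → R) (e : Fin b → R) :
    Isotropic (tensorQF d e) ↔
      ∃ u : Fin b → Fin a → R, u ≠ 0 ∧ ∑ j, e j * evalQF d (u j) = 0 := by
  constructor
  · rintro ⟨w, hw, hw0⟩
    exact ⟨tensorColumns w, (map_ne_zero_iff _ tensorColumns.injective).mpr hw,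
      (evalQF_tensorQF d e w).symm.trans hw0⟩
  · rintro ⟨u, hu, hu0⟩
    refine ⟨tensorColumns.symm u, (map_ne_zero_iff _ tensorColumns.symm.injective).mpr hu, ?_⟩
    rwa [evalQF_tensorQF, LinearEquiv.apply_symm_apply]

lemma isotropic_tensorQF_of_forall_mem_range {k m : ℕ} {d : Fin n → R} {r : Fin k → R}
    {e : Fin m → R} {f : (Fin k → R) →ₗ[R] (Fin n → R)}
    (hf : ∀ z, evalQF d (f z) = evalQF r z)
    {u : Fin m → Fin n → R} (hu0 : u ≠ 0) (hu : ∑ j, e j * evalQF d (u j) = 0)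
    (hmem : ∀ j, u j ∈ LinearMap.range f) : Isotropic (tensorQF r e) := by
  choose z hz using hmem
  refine (isotropic_tensorQF_iff r e).mpr ⟨z, fun hz0 => hu0 ?_, ?_⟩
  · funext j
    rw [← hz, hz0, Pi.zero_apply, map_zero, Pi.zero_apply]
  · simpa only [← hz, hf] using hu

noncomputable def diagBilin (d : Fin n → R) : LinearMap.BilinForm R (Fin n → R) :=
  Matrix.toBilin' (Matrix.diagonal d)

lemma diagBilin_apply (d x y : Fin n → R) : diagBilin d x y = ∑ t, x t * d t * y t := by
  simp [diagBilin, Matrix.toBilin'_apply, Matrix.diagonal_apply]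

lemma diagBilin_self (d x : Fin n → R) : diagBilin d x x = evalQF d x := by
  rw [diagBilin_apply, evalQF]
  exact Finset.sum_congr rfl fun t _ => by ring

lemma diagBilin_isSymm (d : Fin n → R) : (diagBilin d).IsSymm :=
  Matrix.isSymm_toBilin'_iff_isSymm.mpr (Matrix.isSymm_diagonal d)

lemma evalQF_ne_zero_of_anisotropic {d x : Fin n → R} (hd : Anisotropic d) (hx : x ≠ 0) :
    evalQF d x ≠ 0 :=
  fun h => hd ⟨x, hx, h⟩

lemma evalQF_sum_smul {ι : Type*} [Fintype ι] (d : Fin n → R) {c : ι → Fin n → R}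
    (hc : Pairwise fun i j => diagBilin d (c i) (c j) = 0) (z : ι → R) :
    evalQF d (∑ i, z i • c i) = ∑ i, evalQF d (c i) * z i ^ 2 := by
  have hdiag (i : ι) :
      diagBilin d (∑ j, z j • c j) (z i • c i) = z i ^ 2 * evalQF d (c i) := by
    rw [map_sum, LinearMap.sum_apply, Finset.sum_eq_single i
      (fun j _ hji => by simp [hc hji]) (by simp)]
    simp only [map_smul, LinearMap.smul_apply, smul_eq_mul, diagBilin_self]
    ring
  rw [← diagBilin_self, map_sum, Finset.sum_congr rfl fun i _ => hdiag i]
  exact Finset.sum_congr rfl fun i _ => mul_comm _ _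

lemma isometric_of_orthogonal_basis {m : ℕ} {d : Fin n → R}
    (b : Module.Basis (Fin m) R (Fin n → R))
    (hb : Pairwise fun i j => diagBilin d (b i) (b j) = 0) {e : Fin m → R}
    (he : ∀ t, e t = evalQF d (b t)) : Isometric d e := by
  refine ⟨b.equivFun, fun v => ?_⟩
  conv_rhs => rw [← b.sum_equivFun v, evalQF_sum_smul d hb]
  simp only [evalQF, he]

lemma isometric_osum_of_isCompl {d : Fin n → R} {X Y : Submodule R (Fin n → R)}
    (hXY : IsCompl X Y) (hYX : Y ≤ (diagBilin d).orthogonal X) {k m : ℕ}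
    (bX : Module.Basis (Fin k) R X) (bY : Module.Basis (Fin m) R Y)
    (hbX : ((diagBilin d).restrict X).IsOrthoᵢ bX)
    (hbY : ((diagBilin d).restrict Y).IsOrthoᵢ bY) :
    Isometric d (osum (fun i => evalQF d (bX i)) (fun j => evalQF d (bY j))) := by
  set b := ((bX.prod bY).map (X.prodEquivOfIsCompl Y hXY)).reindex finSumFinEquiv
  set c := Sum.elim (X.subtype ∘ bX) (Y.subtype ∘ bY)
  have hb : ∀ s, b (finSumFinEquiv s) = c s := by
    rintro (i | j) <;> simp [b, c]
  have hc : Pairwise fun s s' => diagBilin d (c s) (c s') = 0 := by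
    rintro (i | j) (i' | j') h
    · exact hbX (by simpa using h)
    · exact hYX (bY j').2 _ (bX i).2
    · exact ((diagBilin_isSymm d).eq _ _).trans (hYX (bY j).2 _ (bX i').2)
    · exact hbY (by simpa using h)
  refine isometric_of_orthogonal_basis b (fun t t' h => ?_) (fun t => ?_)
  · obtain ⟨s, rfl⟩ := finSumFinEquiv.surjective t
    obtain ⟨s', rfl⟩ := finSumFinEquiv.surjective t'
    rw [hb, hb]
    exact hc (fun h' => h (congrArg _ h'))
  · obtain ⟨s, rfl⟩ := finSumFinEquiv.surjective t
    rw [hb]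
    rcases s with i | j <;> simp [c, osum]

end CommRing

variable {F : Type*} [Field F] {n : ℕ}

lemma isCompl_orthogonal_of_anisotropic {d : Fin n → F} (hd : Anisotropic d)
    (X : Submodule F (Fin n → F)) : IsCompl X ((diagBilin d).orthogonal X) := by
  refine ((diagBilin d).restrict_nondegenerate_iff_isCompl_orthogonal
    (diagBilin_isSymm d).isRefl).mp <| (LinearMap.IsRefl.nondegenerate_iff_separatingLeft
      ((diagBilin_isSymm d).restrict X).isRefl).mpr fun x hx => Subtype.ext ?_
  by_contra hx0
  refine evalQF_ne_zero_of_anisotropic hd hx0 ?_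
  simpa [diagBilin_self] using hx x

lemma exists_subform_of_submodule [Invertible (2 : F)] {d : Fin n → F} (hd : Anisotropic d)
    (X : Submodule F (Fin n → F)) :
    ∃ r : Fin (Module.finrank F X) → F, Nondeg r ∧ Subform r d ∧
      ∃ f : (Fin (Module.finrank F X) → F) →ₗ[F] (Fin n → F),
        LinearMap.range f = X ∧ ∀ z, evalQF d (f z) = evalQF r z := by
  set Y := (diagBilin d).orthogonal X
  have hsymm (W : Submodule F (Fin n → F)) : LinearMap.IsSymm ((diagBilin d).restrict W) :=
    LinearMap.BilinForm.isSymm_iff.mp ((diagBilin_isSymm d).restrict W)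
  obtain ⟨bX, hbX⟩ := LinearMap.BilinForm.exists_orthogonal_basis (hsymm X)
  obtain ⟨bY, hbY⟩ := LinearMap.BilinForm.exists_orthogonal_basis (hsymm Y)
  have hnondeg {W : Submodule F (Fin n → F)} {m : ℕ} (b : Module.Basis (Fin m) F W) :
      Nondeg fun i => evalQF d (b i) :=
    fun i => evalQF_ne_zero_of_anisotropic hd (by simpa using b.ne_zero i)
  refine ⟨_, hnondeg bX, ⟨_, _, hnondeg bY, isometric_osum_of_isCompl
    (isCompl_orthogonal_of_anisotropic hd X) le_rfl bX bY hbX hbY⟩,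
    X.subtype ∘ₗ bX.equivFun.symm.toLinearMap, ?_, fun z => ?_⟩
  · rw [LinearMap.range_comp, LinearEquiv.range, Submodule.map_top, Submodule.range_subtype]
  · simp only [LinearMap.coe_comp, Function.comp_apply, LinearEquiv.coe_coe,
      Module.Basis.equivFun_symm_apply, map_sum, map_smul, Submodule.subtype_apply]
    exact evalQF_sum_smul d hbX z

end QF

open QF in
theorem stmt_4_general {F : Type*} [Field F] (h2 : (2 : F) ≠ 0)
    {np nq : ℕ} (p : Fin np → F) (q : Fin nq → F)
    (hpan : Anisotropic p) (hiso : Isotropic (tensorQF p q)) :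
    ∃ (k : ℕ) (r : Fin k → F), k ≤ nq ∧ Nondeg r ∧ Subform r p ∧
      Isotropic (tensorQF r q) := by
  have : Invertible (2 : F) := invertibleOfNonzero h2
  obtain ⟨u, hu0, hu⟩ := (isotropic_tensorQF_iff p q).mp hiso
  set X := Submodule.span F (Set.range u)
  obtain ⟨r, hr, hrp, f, hf, hfr⟩ := exists_subform_of_submodule hpan X
  have hX : Module.finrank F X ≤ nq := (finrank_range_le_card u).trans_eq (Fintype.card_fin nq)
  exact ⟨_, r, hX, hr, hrp, isotropic_tensorQF_of_forall_mem_range hfr hu0 hu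
    fun j => hf.symm ▸ Submodule.subset_span (Set.mem_range_self j)⟩

open QF in
/-- Becher's theorem: if `p` and `q` are forms over `F` (char `F ≠ 2`) with `p` anisotropic and
`p ⊗ q` isotropic, then `p` contains a subform `r` with `dim r ≤ dim q` such that `r ⊗ q` is
isotropic. -/
theorem stmt_4 {F : Type*} [Field F] (h2 : (2 : F) ≠ 0)
    {np nq : ℕ} (p : Fin np → F) (q : Fin nq → F)
    (hp : Nondeg p) (hq : Nondeg q) (hp0 : 0 < np) (hq0 : 0 < nq)
    (hpan : Anisotropic p) (hiso : Isotropic (tensorQF p q)) :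
    ∃ (k : ℕ) (r : Fin k → F), k ≤ nq ∧ Nondeg r ∧ Subform r p ∧
      Isotropic (tensorQF r q) :=
  stmt_4_general h2 p q hpan hiso
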